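/- arXiv:2306.04623 — 3 statements merged into one kernel-verified Lean document; each statement's English description precedes it below -/
import Mathlib

section
/- Let r be a square root on a pseudo MV-algebra M = Γ(G,u). Then for each x ∈ M there exists a unique element R(x) ∈ M with R(x) ≤ r(0)⁻ such that R(x) ⊕ R(x) = x. -/
/-!
Write `s = r x` and `t = r 0`. By (Sq3), `r (x~) = (s - t)~` and `r (x⁻) = (-t + s)⁻`, so (Sq1) at
`x~` and `x⁻` says that both `s - t` and `-t + s` are `⊕`-halves of `x`, while (Sq2) at `x~` and
`x⁻` says that every `⊕`-half of `x` lies above both of them. Hence `s - t = -t + s`: `t` commutes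
with every value of `r`. For `0 ≤ d ≤ t`, `d` is a `⊕`-half of `d + d ≤ u`, and comparing it with
the half `r (d + d) - t` gives `r (d + d) = d + t`, so `t` also commutes with `d`. A half
`z ≤ t⁻` of `x` differs from `s - t` by such a `d`, so it commutes with `t`; then
`(z + t) ⊙ (z + t) ≤ z ⊕ z = x` because `t ⊙ t = 0`, and (Sq2) gives `z + t ≤ s`, i.e. `z = s - t`.
-/

section Core

variable {G : Type} [Lattice G] [AddGroup G]

/-- `u` is a strong unit of the ℓ-group `G`. -/
def IsStrongUnit (u : G) : Prop :=
  0 ≤ u ∧ ∀ g : G, ∃ n : ℕ, 1 ≤ n ∧ g ≤ n • u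

/-- Truncated addition `x ⊕ y = (x + y) ⊓ u` of the pseudo MV-algebra `Γ(G,u)`. -/
def oplus (u x y : G) : G := (x + y) ⊓ u

/-- Left negation `x⁻ = u - x`. -/
def negl (u x : G) : G := u - x

/-- Right negation `x~ = -x + u`. -/
def negr (u x : G) : G := -x + u

/-- `x ⊙ y = (x - u + y) ⊔ 0`. -/
def odot (u x y : G) : G := (x - u + y) ⊔ 0

/-- `r` is a square root on the pseudo MV-algebra `M = Γ(G,u)`:
it maps `M` to `M` and satisfies (Sq1), (Sq2), (Sq3). -/
def IsSquareRoot (u : G) (r : G → G) : Prop :=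
  (∀ x, 0 ≤ x → x ≤ u → 0 ≤ r x ∧ r x ≤ u) ∧
  (∀ x, 0 ≤ x → x ≤ u → odot u (r x) (r x) = x) ∧
  (∀ x y, 0 ≤ x → x ≤ u → 0 ≤ y → y ≤ u → odot u y y ≤ x → y ≤ r x) ∧
  (∀ x, 0 ≤ x → x ≤ u → r (negl u x) = oplus u (negl u (r x)) (r 0)) ∧
  (∀ x, 0 ≤ x → x ≤ u → r (negr u x) = oplus u (r 0) (negr u (r x)))

/-- `r` is strict: `r 0 = r 0⁻`. -/
def IsStrict (u : G) (r : G → G) : Prop := r 0 = negl u (r 0)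

end Core

/-- An additive structure is two-divisible if every element is `h + h` for some `h`. -/
def TwoDivisible (A : Type) [Add A] : Prop := ∀ g : A, ∃ h : A, h + h = g

section PseudoMV

variable {G : Type} [Lattice G] [AddGroup G] {u : G} {r : G → G} {x : G}

lemma negr_nonneg [AddLeftMono G] {a : G} (ha : a ≤ u) : 0 ≤ negr u a := le_neg_add_iff_le.2 ha

lemma negl_nonneg [AddRightMono G] {a : G} (ha : a ≤ u) : 0 ≤ negl u a := sub_nonneg.2 ha

lemma negl_le [AddLeftMono G] {a : G} (ha : 0 ≤ a) : negl u a ≤ u := sub_le_self u ha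

lemma IsSquareRoot.apply_zero_sub_add_self_nonpos (hr : IsSquareRoot u r) (hu : 0 ≤ u) :
    r 0 - u + r 0 ≤ 0 :=
  le_sup_left.trans (hr.2.1 0 le_rfl hu).le

lemma IsSquareRoot.apply_zero_le (hr : IsSquareRoot u r) (hx0 : 0 ≤ x) (hxu : x ≤ u) :
    r 0 ≤ r x := by
  have hu := hx0.trans hxu
  refine hr.2.2.1 x (r 0) hx0 hxu (hr.1 0 le_rfl hu).1 (hr.1 0 le_rfl hu).2 ?_
  rwa [hr.2.1 0 le_rfl hu]

lemma IsSquareRoot.apply_negl [AddLeftMono G] (hr : IsSquareRoot u r) (hx0 : 0 ≤ x)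
    (hxu : x ≤ u) :
    r (negl u x) = negl u (-r 0 + r x) := by
  have h : negl u (r x) + r 0 = negl u (-r 0 + r x) := by
    simp only [negl, sub_eq_add_neg, neg_add_rev, neg_neg, add_assoc]
  rw [hr.2.2.2.1 x hx0 hxu, oplus, h, inf_eq_left]
  exact negl_le (le_neg_add_iff_le.2 (hr.apply_zero_le hx0 hxu))

variable [AddLeftMono G] [AddRightMono G]

lemma odot_negr_negr (a b : G) : odot u (negr u a) (negr u b) = negr u (oplus u b a) := by
  simp only [odot, negr, oplus, neg_inf, sup_add, neg_add_rev, add_sub_cancel_right, add_assoc,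
    neg_add_cancel]

lemma odot_negl_negl (a b : G) : odot u (negl u a) (negl u b) = negl u (oplus u b a) := by
  rw [odot, negl, negl, negl, oplus, sub_inf, sub_self]
  congr 1
  simp only [sub_eq_add_neg, neg_add_rev, add_assoc, neg_add_cancel_left]

lemma odot_le_oplus {a b : G} (ha : 0 ≤ a) (hb : 0 ≤ b) (hau : a ≤ u) (hbu : b ≤ u) :
    odot u a b ≤ oplus u a b := by
  have hu : 0 ≤ u := ha.trans hau
  refine sup_le (le_inf ?_ ?_) (le_inf (add_nonneg ha hb) hu)
  · exact add_le_add_left (sub_le_self a hu) b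
  · calc a - u + b ≤ 0 + u := add_le_add (sub_nonpos.2 hau) hbu
      _ = u := zero_add u

lemma negr_le_negr_iff {a b : G} : negr u a ≤ negr u b ↔ b ≤ a := by
  rw [negr, negr, add_le_add_iff_right, neg_le_neg_iff]

lemma negl_le_negl_iff {a b : G} : negl u a ≤ negl u b ↔ b ≤ a :=
  sub_le_sub_iff_left u

lemma negr_le {a : G} (ha : 0 ≤ a) : negr u a ≤ u := by
  rwa [negr, neg_add_le_iff_le_add, le_add_iff_nonneg_left]

namespace IsSquareRoot

lemma apply_negr (hr : IsSquareRoot u r) (hx0 : 0 ≤ x) (hxu : x ≤ u) :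
    r (negr u x) = negr u (r x - r 0) := by
  have h : r 0 + negr u (r x) = negr u (r x - r 0) := by
    simp only [negr, sub_eq_add_neg, neg_add_rev, neg_neg, add_assoc]
  rw [hr.2.2.2.2 x hx0 hxu, oplus, h, inf_eq_left]
  exact negr_le (sub_nonneg.2 (hr.apply_zero_le hx0 hxu))

lemma oplus_sub_self (hr : IsSquareRoot u r) (hx0 : 0 ≤ x) (hxu : x ≤ u) :
    oplus u (r x - r 0) (r x - r 0) = x := by
  have h := hr.2.1 _ (negr_nonneg hxu) (negr_le hx0)
  rw [hr.apply_negr hx0 hxu, odot_negr_negr] at h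
  simpa only [negr, add_left_inj, neg_inj] using h

lemma oplus_neg_add_self (hr : IsSquareRoot u r) (hx0 : 0 ≤ x) (hxu : x ≤ u) :
    oplus u (-r 0 + r x) (-r 0 + r x) = x := by
  have h := hr.2.1 _ (negl_nonneg hxu) (negl_le hx0)
  rw [hr.apply_negl hx0 hxu, odot_negl_negl] at h
  simpa only [negl, sub_right_inj] using h

lemma sub_le_of_oplus_self_eq (hr : IsSquareRoot u r) (hx0 : 0 ≤ x) (hxu : x ≤ u) {z : G}
    (hz0 : 0 ≤ z) (hzu : z ≤ u) (hz : oplus u z z = x) : r x - r 0 ≤ z := by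
  rw [← negr_le_negr_iff (u := u), ← hr.apply_negr hx0 hxu]
  refine hr.2.2.1 _ _ (negr_nonneg hxu) (negr_le hx0) (negr_nonneg hzu) (negr_le hz0) ?_
  rw [odot_negr_negr, hz]

lemma neg_add_le_of_oplus_self_eq (hr : IsSquareRoot u r) (hx0 : 0 ≤ x) (hxu : x ≤ u) {z : G}
    (hz0 : 0 ≤ z) (hzu : z ≤ u) (hz : oplus u z z = x) : -r 0 + r x ≤ z := by
  rw [← negl_le_negl_iff (u := u), ← hr.apply_negl hx0 hxu]
  refine hr.2.2.1 _ _ (negl_nonneg hxu) (negl_le hx0) (negl_nonneg hzu) (negl_le hz0) ?_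
  rw [odot_negl_negl, hz]

lemma addCommute_apply_zero (hr : IsSquareRoot u r) (hx0 : 0 ≤ x) (hxu : x ≤ u) :
    AddCommute (r 0) (r x) := by
  have hu := hx0.trans hxu
  have ht : 0 ≤ r 0 := (hr.1 0 le_rfl hu).1
  have hts : r 0 ≤ r x := hr.apply_zero_le hx0 hxu
  have hsu : r x ≤ u := (hr.1 x hx0 hxu).2
  have h₁ : -r 0 + r x ≤ r x - r 0 :=
    hr.neg_add_le_of_oplus_self_eq hx0 hxu (sub_nonneg.2 hts) ((sub_le_self _ ht).trans hsu)
      (hr.oplus_sub_self hx0 hxu)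
  have h₂ : r x - r 0 ≤ -r 0 + r x :=
    hr.sub_le_of_oplus_self_eq hx0 hxu (le_neg_add_iff_le.2 hts)
      ((neg_add_le_iff_le_add.2 (le_add_of_nonneg_left ht)).trans hsu)
      (hr.oplus_neg_add_self hx0 hxu)
  have h : r x - r 0 = -r 0 + r x := le_antisymm h₂ h₁
  rw [eq_neg_add_iff_add_eq, ← add_sub_assoc, sub_eq_iff_eq_add] at h
  exact h

lemma addCommute_of_nonneg_of_le (hr : IsSquareRoot u r) (hu : 0 ≤ u) {d : G} (hd0 : 0 ≤ d)
    (hdt : d ≤ r 0) : AddCommute (r 0) d := by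
  have hdd : d + d ≤ u := by
    have h := hr.apply_zero_sub_add_self_nonpos hu
    rw [← le_neg_iff_add_nonpos_right, sub_le_iff_le_add, le_neg_add_iff_add_le] at h
    exact (add_le_add hdt hdt).trans h
  have hdd0 : 0 ≤ d + d := add_nonneg hd0 hd0
  have hsol : oplus u d d = d + d := inf_eq_left.2 hdd
  set w := r (d + d) - r 0
  have hwd : w ≤ d :=
    hr.sub_le_of_oplus_self_eq hdd0 hdd hd0 (hdt.trans (hr.1 0 le_rfl hu).2) hsol
  have hww : w + w = d + d := by
    have h := hr.oplus_sub_self hdd0 hdd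
    rwa [oplus, inf_eq_left.2 ((add_le_add hwd hwd).trans hdd)] at h
  have hdw : d ≤ w := le_of_add_le_add_right (hww ▸ add_le_add_right hwd w : d + d ≤ w + d)
  have h := hr.addCommute_apply_zero hdd0 hdd
  rw [sub_eq_iff_eq_add.1 (le_antisymm hwd hdw)] at h
  exact add_right_cancel (b := r 0) (by rw [add_assoc]; exact h.eq)

lemma le_apply_of_oplus_self_eq (hr : IsSquareRoot u r) (hx0 : 0 ≤ x) (hxu : x ≤ u) {z : G}
    (hz0 : 0 ≤ z) (hzu : z ≤ u) (hz : oplus u z z = x) : z ≤ r x :=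
  hr.2.2.1 x z hx0 hxu hz0 hzu (hz ▸ odot_le_oplus hz0 hz0 hzu hzu)

lemma addCommute_of_sub_le_of_le_apply (hr : IsSquareRoot u r) (hx0 : 0 ≤ x) (hxu : x ≤ u)
    {z : G} (hwz : r x - r 0 ≤ z) (hzs : z ≤ r x) : AddCommute (r 0) z := by
  have hd : AddCommute (r 0) (-(r x - r 0) + z) := by
    refine hr.addCommute_of_nonneg_of_le (hx0.trans hxu) (le_neg_add_iff_le.2 hwz) ?_
    calc -(r x - r 0) + z ≤ -(r x - r 0) + r x := add_le_add_right hzs _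
      _ = r 0 := by rw [neg_sub, sub_add_cancel]
  have hw : AddCommute (r 0) (r x - r 0) := by
    rw [sub_eq_add_neg]
    exact (hr.addCommute_apply_zero hx0 hxu).add_right (AddCommute.refl _).neg_right
  simpa only [add_neg_cancel_left] using hw.add_right hd

lemma eq_sub_of_oplus_self_eq (hr : IsSquareRoot u r) (hx0 : 0 ≤ x) (hxu : x ≤ u) {z : G}
    (hz0 : 0 ≤ z) (hzu : z ≤ u) (hzt : z ≤ negl u (r 0)) (hz : oplus u z z = x) :
    z = r x - r 0 := by
  have hu := hx0.trans hxu
  have hwz : r x - r 0 ≤ z := hr.sub_le_of_oplus_self_eq hx0 hxu hz0 hzu hz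
  have hcomm : AddCommute (r 0) z :=
    hr.addCommute_of_sub_le_of_le_apply hx0 hxu hwz
      (hr.le_apply_of_oplus_self_eq hx0 hxu hz0 hzu hz)
  have hztu : z + r 0 ≤ u := le_sub_iff_add_le.1 hzt
  have hzt0 : 0 ≤ z + r 0 := add_nonneg hz0 (hr.1 0 le_rfl hu).1
  have hzts : z + r 0 ≤ r x := by
    refine hr.2.2.1 x _ hx0 hxu hzt0 hztu ?_
    rw [← hz]
    refine sup_le (le_inf ?_ ?_) (le_inf (add_nonneg hz0 hz0) hu)
    · calc z + r 0 - u + (z + r 0) = z + r 0 - u + (r 0 + z) := by rw [hcomm.eq]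
        _ = z + (r 0 - u + r 0) + z := by simp only [sub_eq_add_neg, add_assoc]
        _ ≤ z + 0 + z := by gcongr; exact hr.apply_zero_sub_add_self_nonpos hu
        _ = z + z := by rw [add_zero]
    · exact le_sup_left.trans ((odot_le_oplus hzt0 hzt0 hztu hztu).trans inf_le_right)
  exact le_antisymm (le_sub_iff_add_le.2 hzts) hwz

end IsSquareRoot

end PseudoMV

theorem stmt_1_general {G : Type} [Lattice G] [AddGroup G]
    [CovariantClass G G (· + ·) (· ≤ ·)]
    [CovariantClass G G (Function.swap (· + ·)) (· ≤ ·)]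
    (u : G) (r : G → G) (hr : IsSquareRoot u r)
    (x : G) (hx0 : 0 ≤ x) (hxu : x ≤ u) :
    ∃! R : G, (0 ≤ R ∧ R ≤ u) ∧ R ≤ negl u (r 0) ∧ oplus u R R = x := by
  have hu : 0 ≤ u := hx0.trans hxu
  have hts : r 0 ≤ r x := hr.apply_zero_le hx0 hxu
  refine ⟨r x - r 0, ⟨⟨sub_nonneg.2 hts, ?_⟩, ?_, hr.oplus_sub_self hx0 hxu⟩, ?_⟩
  · exact (sub_le_self _ (hr.1 0 le_rfl hu).1).trans (hr.1 x hx0 hxu).2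
  · exact sub_le_sub_right (hr.1 x hx0 hxu).2 _
  · rintro z ⟨⟨hz0, hzu⟩, hzt, hz⟩
    exact hr.eq_sub_of_oplus_self_eq hx0 hxu hz0 hzu hzt hz

/-- For each `x ∈ M` there is a unique `R(x) ∈ M` with `R(x) ≤ r(0)⁻` and
`R(x) ⊕ R(x) = x`. -/
theorem stmt_1 {G : Type} [Lattice G] [AddGroup G]
    [CovariantClass G G (· + ·) (· ≤ ·)]
    [CovariantClass G G (Function.swap (· + ·)) (· ≤ ·)]
    (u : G) (hu : IsStrongUnit u) (r : G → G) (hr : IsSquareRoot u r)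
    (x : G) (hx0 : 0 ≤ x) (hxu : x ≤ u) :
    ∃! R : G, (0 ≤ R ∧ R ≤ u) ∧ R ≤ negl u (r 0) ∧ oplus u R R = x :=
  stmt_1_general u r hr x hx0 hxu
end

section
/- Let r be a square root on a pseudo MV-algebra M = Γ(G,u). Then x ⊙ r(0) ≤ x ⊙ x for every x ∈ M. -/
/-!
Put `s = x ⊙ x`. By (Sq2) both `x` and `r 0` lie below `r s` (the latter because
`r 0 ⊙ r 0 = 0 ≤ s`), so by monotonicity of `⊙` and (Sq1),
`x ⊙ r 0 ≤ r s ⊙ r s = s`.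
-/

section Odot

variable {G : Type} [Lattice G] [AddGroup G]

theorem odot_nonneg (u x y : G) : 0 ≤ odot u x y := le_sup_right

theorem odot_le_right [AddRightMono G] {u x y : G} (hxu : x ≤ u) (hy : 0 ≤ y) :
    odot u x y ≤ y := by
  refine sup_le ?_ hy
  calc x - u + y ≤ 0 + y := add_le_add_left (sub_nonpos.2 hxu) y
    _ = y := zero_add y

theorem odot_le_odot [AddLeftMono G] [AddRightMono G] {u x x' y y' : G} (hx : x ≤ x')
    (hy : y ≤ y') :
    odot u x y ≤ odot u x' y' :=
  sup_le_sup_right (add_le_add (sub_le_sub_right hx u) hy) 0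

end Odot

namespace IsSquareRoot

variable {G : Type} [Lattice G] [AddGroup G] {u : G} {r : G → G}

theorem le_apply_odot_self [AddRightMono G] (hr : IsSquareRoot u r)
    {y : G} (hy0 : 0 ≤ y) (hyu : y ≤ u) : y ≤ r (odot u y y) :=
  hr.2.2.1 _ y (odot_nonneg u y y) ((odot_le_right hyu hy0).trans hyu) hy0 hyu le_rfl

theorem apply_zero_le_s3 (hr : IsSquareRoot u r) {x : G} (hx0 : 0 ≤ x) (hxu : x ≤ u) :
    r 0 ≤ r x := by
  have hu : (0 : G) ≤ u := hx0.trans hxu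
  obtain ⟨hr0, hr0u⟩ := hr.1 0 le_rfl hu
  exact hr.2.2.1 x (r 0) hx0 hxu hr0 hr0u ((hr.2.1 0 le_rfl hu).trans_le hx0)

end IsSquareRoot

theorem stmt_3_general {G : Type} [Lattice G] [AddGroup G]
    [CovariantClass G G (· + ·) (· ≤ ·)]
    [CovariantClass G G (Function.swap (· + ·)) (· ≤ ·)]
    (u : G) (r : G → G) (hr : IsSquareRoot u r)
    (x : G) (hx0 : 0 ≤ x) (hxu : x ≤ u) :
    odot u x (r 0) ≤ odot u x x := by
  set s := odot u x x
  have hs0 : 0 ≤ s := odot_nonneg u x x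
  have hsu : s ≤ u := (odot_le_right hxu hx0).trans hxu
  calc odot u x (r 0) ≤ odot u (r s) (r s) :=
        odot_le_odot (hr.le_apply_odot_self hx0 hxu) (hr.apply_zero_le_s3 hs0 hsu)
    _ = s := hr.2.1 s hs0 hsu

/-- `x ⊙ r(0) ≤ x ⊙ x` for every `x ∈ M`. -/
theorem stmt_3 {G : Type} [Lattice G] [AddGroup G]
    [CovariantClass G G (· + ·) (· ≤ ·)]
    [CovariantClass G G (Function.swap (· + ·)) (· ≤ ·)]
    (u : G) (hu : IsStrongUnit u) (r : G → G) (hr : IsSquareRoot u r)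
    (x : G) (hx0 : 0 ≤ x) (hxu : x ≤ u) :
    odot u x (r 0) ≤ odot u x x :=
  stmt_3_general u r hr x hx0 hxu
end

section
/- Let r be a square root on a pseudo MV-algebra M = Γ(G,u) such that the supremum a = ⋁_{n∈ℕ, n≥1} rⁿ(0) of the iterates of r at 0 exists in M. Then a ⊕ a = a, and every x ∈ M with a ≤ x satisfies x ⊕ x = x; consequently the interval pseudo MV-algebra [a,1] (with x ⊕_a y = x ⊕ y, x^{−a} = x⁻ ∨ a, x^{~a} = x~ ∨ a, bottom a and top 1) is a Boolean algebra. -/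
/-- `m` is the infimum of `S` computed inside the interval `M = [0,u]`. -/
def IsInfIn {G : Type} [Lattice G] [AddGroup G] (u : G) (S : Set G) (m : G) : Prop :=
  (0 ≤ m ∧ m ≤ u) ∧ (∀ s ∈ S, m ≤ s) ∧
  ∀ x : G, 0 ≤ x → x ≤ u → (∀ s ∈ S, x ≤ s) → x ≤ m

/-- `m` is the supremum of `S` computed inside the interval `M = [0,u]`. -/
def IsSupIn {G : Type} [Lattice G] [AddGroup G] (u : G) (S : Set G) (m : G) : Prop :=
  (0 ≤ m ∧ m ≤ u) ∧ (∀ s ∈ S, s ≤ m) ∧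
  ∀ x : G, 0 ≤ x → x ≤ u → (∀ s ∈ S, s ≤ x) → m ≤ x

section PseudoMV

variable {G : Type} [AddGroup G]

lemma add_negr (u x : G) : x + negr u x = u := by
  simp [negr]

variable [Lattice G] [AddLeftMono G]

lemma oplus_self (u x : G) : oplus u x x = x + x ⊓ negr u x := by
  rw [add_inf, add_negr, oplus]

lemma negr_nonneg_s14 {u x : G} (h : x ≤ u) : 0 ≤ negr u x :=
  le_neg_add_iff_add_le.2 ((add_zero x).le.trans h)

variable [AddRightMono G]

lemma negr_anti {u a x : G} (h : a ≤ x) : negr u x ≤ negr u a :=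
  add_le_add_left (neg_le_neg_iff.2 h) u

lemma oplus_self_eq_self {u x : G} (hx : 0 ≤ x) (hxu : x ≤ u) (h : x ⊓ negr u x ≤ 0) :
    oplus u x x = x := by
  refine le_antisymm ?_ (le_inf (le_add_of_nonneg_left hx) hxu)
  rw [oplus_self]
  simpa using add_le_add_right h x

lemma odot_inf_negr_self_le_zero (u x : G) :
    odot u (x ⊓ negr u x) (x ⊓ negr u x) ≤ 0 := by
  set c := x ⊓ negr u x
  have hcu : c - u ≤ -x :=
    calc c - u ≤ negr u x - u := sub_le_sub_right inf_le_right u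
      _ = -x := add_sub_cancel_right (-x) u
  refine sup_le ?_ le_rfl
  calc c - u + c ≤ -x + x := add_le_add hcu inf_le_left
    _ = 0 := neg_add_cancel x

lemma odot_self_add_le {u y a b : G} (hya : y ≤ a) (hab : a + b ≤ u) (hba : b ≤ a) :
    odot u y y + b ≤ a := by
  have hyb : y + b ≤ u := (add_le_add_left hya b).trans hab
  rw [odot, sup_add, zero_add]
  refine sup_le ?_ hba
  calc y - u + y + b = (y - u) + (y + b) := add_assoc _ _ _
    _ ≤ (y - u) + u := add_le_add_right hyb _
    _ = y := sub_add_cancel y u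
    _ ≤ a := hya

lemma IsSupIn.nonpos_of_forall_add_le {u a b : G} {S : Set G} (ha : IsSupIn u S a)
    (hb : 0 ≤ b) (hba : b ≤ a) (hS : ∀ s ∈ S, s + b ≤ a) : b ≤ 0 := by
  obtain ⟨⟨-, hau⟩, -, hlub⟩ := ha
  have : a ≤ a - b :=
    hlub _ (sub_nonneg.2 hba) ((sub_le_self a hb).trans hau) fun s hs => le_sub_iff_add_le.2 (hS s hs)
  exact (add_le_iff_nonpos_right a).1 (le_sub_iff_add_le.1 this)

end PseudoMV

namespace IsSquareRoot

variable {G : Type} [Lattice G] [AddGroup G] {u : G} {r : G → G}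

lemma iterate_zero_mem (hr : IsSquareRoot u r) (hu : 0 ≤ u) (n : ℕ) :
    0 ≤ r^[n] 0 ∧ r^[n] 0 ≤ u := by
  induction n with
  | zero => exact ⟨le_rfl, hu⟩
  | succ n ih =>
    rw [Function.iterate_succ_apply']
    exact hr.1 _ ih.1 ih.2

variable [AddLeftMono G] [AddRightMono G]

lemma inf_negr_le_zero_of_isSupIn (hr : IsSquareRoot u r) {a : G}
    (ha : IsSupIn u {x : G | ∃ n : ℕ, 1 ≤ n ∧ x = r^[n] 0} a) : a ⊓ negr u a ≤ 0 := by
  have hau : a ≤ u := ha.1.2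
  have hb : 0 ≤ a ⊓ negr u a := le_inf ha.1.1 (negr_nonneg_s14 hau)
  have hab : a + a ⊓ negr u a ≤ u := (add_le_add_right inf_le_right a).trans (add_negr u a).le
  refine ha.nonpos_of_forall_add_le hb inf_le_left ?_
  rintro _ ⟨n, -, rfl⟩
  obtain ⟨h0, hu⟩ := hr.iterate_zero_mem (ha.1.1.trans hau) n
  have hsq : odot u (r^[n + 1] 0) (r^[n + 1] 0) = r^[n] 0 := by
    rw [Function.iterate_succ_apply']
    exact hr.2.1 _ h0 hu
  rw [← hsq]
  exact odot_self_add_le (ha.2.1 _ ⟨n + 1, Nat.le_add_left 1 n, rfl⟩) hab inf_le_left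

lemma inf_negr_le_apply_zero (hr : IsSquareRoot u r) {x : G} (hx : 0 ≤ x) (hxu : x ≤ u) :
    x ⊓ negr u x ≤ r 0 :=
  hr.2.2.1 0 _ le_rfl (hx.trans hxu) (le_inf hx (negr_nonneg_s14 hxu))
    (inf_le_left.trans hxu) (odot_inf_negr_self_le_zero u x)

end IsSquareRoot

theorem stmt_14_general {G : Type} [Lattice G] [AddGroup G]
    [CovariantClass G G (· + ·) (· ≤ ·)]
    [CovariantClass G G (Function.swap (· + ·)) (· ≤ ·)]
    (u : G) (r : G → G) (hr : IsSquareRoot u r)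
    (a : G) (ha : IsSupIn u {x : G | ∃ n : ℕ, 1 ≤ n ∧ x = r^[n] 0} a) :
    oplus u a a = a ∧ ∀ x : G, a ≤ x → x ≤ u → oplus u x x = x := by
  have hr0a : r 0 ≤ a := ha.2.1 _ ⟨1, le_rfl, rfl⟩
  have hbool (x : G) (hax : a ≤ x) (hxu : x ≤ u) : oplus u x x = x := by
    have hx : 0 ≤ x := ha.1.1.trans hax
    refine oplus_self_eq_self hx hxu (le_trans ?_ (hr.inf_negr_le_zero_of_isSupIn ha))
    exact le_inf ((hr.inf_negr_le_apply_zero hx hxu).trans hr0a) (inf_le_right.trans (negr_anti hax))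
  exact ⟨hbool a le_rfl ha.1.2, hbool⟩

/-- if `a = ⋁_{n ≥ 1} rⁿ(0)` exists in `M`, then `a` is Boolean and every
`x ∈ [a,1]` is Boolean, i.e. the interval pseudo MV-algebra `[a,1]` is a Boolean
algebra. -/
theorem stmt_14 {G : Type} [Lattice G] [AddGroup G]
    [CovariantClass G G (· + ·) (· ≤ ·)]
    [CovariantClass G G (Function.swap (· + ·)) (· ≤ ·)]
    (u : G) (hu : IsStrongUnit u) (r : G → G) (hr : IsSquareRoot u r)
    (a : G) (ha : IsSupIn u {x : G | ∃ n : ℕ, 1 ≤ n ∧ x = r^[n] 0} a) :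
    oplus u a a = a ∧ ∀ x : G, a ≤ x → x ≤ u → oplus u x x = x :=
  stmt_14_general u r hr a ha
end
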